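/- Let X and Y be real m×n matrices such that Y Yᵀ is positive definite. Then tr((X Xᵀ)^{1/2}) ≤ (1/2)·tr( (Y Yᵀ)^{-1/2} · X Xᵀ ) + (1/2)·tr((Y Yᵀ)^{1/2}), where (Y Yᵀ)^{-1/2} denotes the inverse of the positive definite square root of Y Yᵀ. -/

import Mathlib

/-!
Write `A = (X Xᵀ)^{1/2}` and `B = (Y Yᵀ)^{1/2}`. Since `B⁻¹` is positive semidefinite and `A - B`
is symmetric, `(A - B) B⁻¹ (A - B)` is positive semidefinite; expanding and cycling the trace,
`0 ≤ tr((A - B) B⁻¹ (A - B)) = tr(B⁻¹ A²) - 2 tr A + tr B`, a matrix form of `2ab ≤ a²/b + b`.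
-/

open Matrix

open Classical in
/-- The positive semidefinite square root of a matrix (junk value `0` if the matrix is not
positive semidefinite). -/
noncomputable def matSqrt {k : ℕ} (P : Matrix (Fin k) (Fin k) ℝ) : Matrix (Fin k) (Fin k) ℝ :=
  if h : P.PosSemidef then
    h.1.eigenvectorUnitary.1 * diagonal ((↑) ∘ (√·) ∘ h.1.eigenvalues) *
      (star h.1.eigenvectorUnitary : Matrix (Fin k) (Fin k) ℝ)
  else 0

namespace Matrix

variable {ι R : Type*} [Fintype ι] [DecidableEq ι]
  [CommRing R] [PartialOrder R] [StarRing R] [IsOrderedAddMonoid R]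

theorem two_mul_trace_le_trace_inv_mul_mul_self_add_trace {A B : Matrix ι ι R}
    (hA : A.IsHermitian) (hB : B.PosSemidef) (hdet : IsUnit B.det) :
    2 * A.trace ≤ (B⁻¹ * (A * A)).trace + B.trace := by
  have hAB : (A - B)ᴴ = A - B := (hA.sub hB.isHermitian).eq
  have hsq : 0 ≤ ((A - B) * B⁻¹ * (A - B)).trace := by
    simpa only [hAB] using (hB.inv.mul_mul_conjTranspose_same (A - B)).trace_nonneg
  have hexpand : ((A - B) * B⁻¹ * (A - B)).trace =
      (B⁻¹ * (A * A)).trace + B.trace - 2 * A.trace := by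
    simp only [sub_mul, mul_sub, trace_sub, Matrix.mul_assoc, nonsing_inv_mul _ hdet,
      mul_nonsing_inv _ hdet, Matrix.mul_one, Matrix.one_mul]
    rw [trace_mul_comm A, Matrix.mul_assoc]
    ring
  rwa [hexpand, sub_nonneg] at hsq

end Matrix

section matSqrt

variable {k : ℕ} {P : Matrix (Fin k) (Fin k) ℝ}

theorem matSqrt_posSemidef (hP : P.PosSemidef) : (matSqrt P).PosSemidef := by
  rw [matSqrt, dif_pos hP]
  refine PosSemidef.mul_mul_conjTranspose_same ?_ _
  rw [posSemidef_diagonal_iff]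
  exact fun i => by simp [Real.sqrt_nonneg]

theorem matSqrt_mul_self (hP : P.PosSemidef) : matSqrt P * matSqrt P = P := by
  set U : Matrix (Fin k) (Fin k) ℝ := hP.1.eigenvectorUnitary.1
  have hU : star U * U = 1 := hP.1.eigenvectorUnitary.2.1
  rw [matSqrt, dif_pos hP]
  calc U * diagonal ((↑) ∘ (√·) ∘ hP.1.eigenvalues) * star U *
        (U * diagonal ((↑) ∘ (√·) ∘ hP.1.eigenvalues) * star U)
      = U * (diagonal ((↑) ∘ (√·) ∘ hP.1.eigenvalues) *
          diagonal ((↑) ∘ (√·) ∘ hP.1.eigenvalues)) * star U := by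
        simp only [Matrix.mul_assoc, ← Matrix.mul_assoc (star U) U, hU, Matrix.one_mul]
    _ = U * diagonal ((↑) ∘ hP.1.eigenvalues) * star U := by
        rw [diagonal_mul_diagonal]
        congr 3
        ext i
        simp [Real.mul_self_sqrt (hP.eigenvalues_nonneg i)]
    _ = P := (hP.1.spectral_theorem.trans (Unitary.conjStarAlgAut_apply _ _)).symm

end matSqrt

/-- quadratic (MM) upper bound on the nuclear norm. If `Y Yᵀ` is positive
definite, then `tr((X Xᵀ)^{1/2}) ≤ (1/2)·tr((Y Yᵀ)^{-1/2} · X Xᵀ) + (1/2)·tr((Y Yᵀ)^{1/2})`,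
where `(Y Yᵀ)^{-1/2}` is the inverse of the positive definite square root of `Y Yᵀ`. -/
theorem nuclearNorm_le_quadratic_majorant {m n : ℕ}
    (X Y : Matrix (Fin m) (Fin n) ℝ) (hY : (Y * Yᵀ).PosDef) :
    (matSqrt (X * Xᵀ)).trace ≤
      (1 / 2) * ((matSqrt (Y * Yᵀ))⁻¹ * (X * Xᵀ)).trace +
        (1 / 2) * (matSqrt (Y * Yᵀ)).trace := by
  have hX : (X * Xᵀ).PosSemidef := by
    simpa only [conjTranspose_eq_transpose_of_trivial] using posSemidef_self_mul_conjTranspose X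
  have hdet : IsUnit (matSqrt (Y * Yᵀ)).det := by
    have hsq : IsUnit ((matSqrt (Y * Yᵀ)).det * (matSqrt (Y * Yᵀ)).det) := by
      rw [← det_mul, matSqrt_mul_self hY.posSemidef]
      exact hY.det_pos.ne'.isUnit
    exact isUnit_of_mul_isUnit_left hsq
  have key := two_mul_trace_le_trace_inv_mul_mul_self_add_trace
    (matSqrt_posSemidef hX).isHermitian (matSqrt_posSemidef hY.posSemidef) hdet
  rw [matSqrt_mul_self hX] at key
  linarith
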